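/- Let G be a finite simple graph in which every vertex has degree at least δ, where δ ≥ 1, let J be a δ-regular spanning subgraph of G, let uv be an edge of J, and let ω be a permutation of the edges of G. Then the following are equivalent: (i) J ⊆ G_ω, e_{k(ω)} = uv, and u has degree exactly δ in G_ω; (ii) every edge of J other than uv occurs before uv in the ordering ω, and every edge of G incident to u that does not belong to J occurs after uv in the ordering ω. -/

import Mathlib

open Finset

/-- The degree of a vertex `v` in the graph whose edge set is the finite set `s`
of edges (elements of `Sym2 V`). -/
def degIn {V : Type*} [DecidableEq V] (s : Finset (Sym2 V)) (v : V) : ℕ :=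
  (s.filter (fun e => v ∈ e)).card

/-- Given an ordering `ω` of a finite set `s` of edges, the set consisting of the
first `i` edges `e_{ω(1)}, …, e_{ω(i)}`. -/
def prefixEdges {V : Type*} [DecidableEq V] {s : Finset (Sym2 V)}
    (ω : Fin s.card ≃ {e : Sym2 V // e ∈ s}) (i : ℕ) : Finset (Sym2 V) :=
  (Finset.univ.filter (fun j : Fin s.card => (j : ℕ) < i)).image (fun j => (ω j : Sym2 V))

/-- `k(ω)`: the least `i` such that every vertex has degree at least `δ` in the graph
formed by the first `i` edges of the ordering `ω`. -/
noncomputable def stopIndex {V : Type*} [Fintype V] [DecidableEq V] (δ : ℕ)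
    {s : Finset (Sym2 V)} (ω : Fin s.card ≃ {e : Sym2 V // e ∈ s}) : ℕ :=
  sInf {i | ∀ v : V, δ ≤ degIn (prefixEdges ω i) v}

/-- The edge set of `G_ω`, i.e. the first `k(ω)` edges of the ordering `ω`. -/
noncomputable def finalEdges {V : Type*} [Fintype V] [DecidableEq V] (δ : ℕ)
    {s : Finset (Sym2 V)} (ω : Fin s.card ≃ {e : Sym2 V // e ∈ s}) : Finset (Sym2 V) :=
  prefixEdges ω (stopIndex δ ω)

/-- A graph is `δ`-regular: every vertex has exactly `δ` neighbours. -/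
def regOfDegree {V : Type*} (J : SimpleGraph V) (δ : ℕ) : Prop :=
  ∀ v : V, (J.neighborSet v).ncard = δ

/-- `e` is the last edge `e_{k(ω)}` of `G_ω`: it belongs to the first `k(ω)` edges but
not to the first `k(ω) − 1` edges. -/
noncomputable def lastEdgeIs {V : Type*} [Fintype V] [DecidableEq V] (δ : ℕ)
    {s : Finset (Sym2 V)} (ω : Fin s.card ≃ {e : Sym2 V // e ∈ s}) (e : Sym2 V) : Prop :=
  e ∈ prefixEdges ω (stopIndex δ ω) ∧ e ∉ prefixEdges ω (stopIndex δ ω - 1)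

/-!
Let `t` be the position of `uv` in `ω` and `P` the set of the first `t + 1` edges. The order
condition says exactly that `J ⊆ P` and that every edge of `P` at `u` lies in `J`, i.e. (given
`J ⊆ P`) that `deg_P u = deg_J u = δ`. Then every vertex has degree at least `δ` in `P`, while
removing `uv` leaves `u` with degree `δ - 1`; hence `k(ω) = t + 1`, `G_ω = P` and `uv` is the
last edge. Conversely, if `uv` is the last edge then `G_ω = P`, and `deg_P u = δ` forces the
edges of `P` at `u` to be those of `J`.
-/

section Degree

variable {V : Type*} [DecidableEq V]

lemma degIn_mono {s t : Finset (Sym2 V)} (hst : s ⊆ t) (v : V) : degIn s v ≤ degIn t v :=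
  card_le_card (filter_subset_filter _ hst)

lemma degIn_insert {s : Finset (Sym2 V)} {e : Sym2 V} {v : V} (hv : v ∈ e) (he : e ∉ s) :
    degIn (insert e s) v = degIn s v + 1 := by
  rw [degIn, filter_insert, if_pos hv, card_insert_of_notMem (fun h => he (mem_filter.1 h).1)]
  rfl

variable [Fintype V] {H : SimpleGraph V} [DecidableRel H.Adj]

lemma degIn_edgeFinset (v : V) : degIn H.edgeFinset v = H.degree v := by
  rw [degIn, ← SimpleGraph.incidenceFinset_eq_filter, SimpleGraph.card_incidenceFinset_eq_degree]

variable {P : Finset (Sym2 V)}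

lemma degree_le_degIn (hHP : H.edgeSet ⊆ P) (v : V) : H.degree v ≤ degIn P v := by
  rw [← degIn_edgeFinset]
  exact degIn_mono (fun e he => hHP (SimpleGraph.mem_edgeFinset.1 he)) v

lemma degIn_eq_degree_iff (hHP : H.edgeSet ⊆ P) (v : V) :
    degIn P v = H.degree v ↔ ∀ e ∈ P, v ∈ e → e ∈ H.edgeSet := by
  have hsub : H.edgeFinset.filter (v ∈ ·) ⊆ P.filter (v ∈ ·) :=
    filter_subset_filter _ fun e he => hHP (SimpleGraph.mem_edgeFinset.1 he)
  rw [← degIn_edgeFinset]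
  constructor
  · intro hdeg e he hv
    have heq := eq_of_subset_of_card_le hsub hdeg.le
    have : e ∈ H.edgeFinset.filter (v ∈ ·) := heq ▸ mem_filter.2 ⟨he, hv⟩
    exact SimpleGraph.mem_edgeFinset.1 (mem_filter.1 this).1
  · intro hP
    refine congrArg card (Subset.antisymm (fun e he => ?_) hsub)
    obtain ⟨heP, hv⟩ := mem_filter.1 he
    exact mem_filter.2 ⟨SimpleGraph.mem_edgeFinset.2 (hP e heP hv), hv⟩

end Degree

section Ordering

variable {V : Type*} [DecidableEq V] {s : Finset (Sym2 V)} (ω : Fin s.card ≃ {e : Sym2 V // e ∈ s})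

lemma mem_prefixEdges {e : Sym2 V} (he : e ∈ s) (i : ℕ) :
    e ∈ prefixEdges ω i ↔ (ω.symm ⟨e, he⟩ : ℕ) < i := by
  simp only [prefixEdges, mem_image, mem_filter, mem_univ, true_and]
  constructor
  · rintro ⟨j, hj, rfl⟩
    simpa using hj
  · exact fun h => ⟨ω.symm ⟨e, he⟩, h, by simp⟩

lemma prefixEdges_subset (i : ℕ) : prefixEdges ω i ⊆ s := by
  intro e he
  obtain ⟨j, -, rfl⟩ := mem_image.1 he
  exact (ω j).2

lemma prefixEdges_mono : Monotone (prefixEdges ω) := by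
  intro i j hij e he
  have hes := prefixEdges_subset ω i he
  rw [mem_prefixEdges ω hes] at he ⊢
  omega

lemma prefixEdges_succ {e : Sym2 V} (he : e ∈ s) :
    prefixEdges ω (ω.symm ⟨e, he⟩ + 1) = insert e (prefixEdges ω (ω.symm ⟨e, he⟩)) := by
  ext f
  by_cases hf : f ∈ s
  · rw [mem_insert, mem_prefixEdges ω hf, mem_prefixEdges ω hf, Nat.lt_succ_iff_lt_or_eq,
      Fin.val_inj, ω.symm.injective.eq_iff, Subtype.mk.injEq, or_comm]
  · have hfe : f ≠ e := fun h => hf (h ▸ he)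
    rw [mem_insert, or_iff_right hfe]
    exact iff_of_false (fun h => hf (prefixEdges_subset ω _ h))
      (fun h => hf (prefixEdges_subset ω _ h))

lemma forall_ne_lt_iff_subset_prefixEdges {T : Set (Sym2 V)} (hT : T ⊆ s) {e₀ : Sym2 V}
    (he₀ : e₀ ∈ s) :
    (∀ e (he : e ∈ s), e ∈ T → e ≠ e₀ → ω.symm ⟨e, he⟩ < ω.symm ⟨e₀, he₀⟩) ↔
      T ⊆ prefixEdges ω (ω.symm ⟨e₀, he₀⟩ + 1) := by
  constructor
  · intro h e heT
    rw [Finset.mem_coe, mem_prefixEdges ω (hT heT)]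
    by_cases hne : e = e₀
    · subst hne
      exact Nat.lt_succ_self _
    · exact Nat.lt_succ_of_lt (h e (hT heT) heT hne)
  · intro h e he heT hne
    have hle := Nat.lt_succ_iff.1 ((mem_prefixEdges ω he _).1 (h heT))
    refine lt_of_le_of_ne hle fun heq => hne ?_
    simpa using ω.symm.injective heq

lemma forall_lt_iff_mem_of_mem_prefixEdges (T : Set (Sym2 V)) {e₀ : Sym2 V} (he₀ : e₀ ∈ s)
    (u : V) :
    (∀ e (he : e ∈ s), u ∈ e → e ∉ T → ω.symm ⟨e₀, he₀⟩ < ω.symm ⟨e, he⟩) ↔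
      ∀ e ∈ prefixEdges ω (ω.symm ⟨e₀, he₀⟩ + 1), u ∈ e → e ∈ T := by
  constructor
  · intro h e heP hu
    have he := prefixEdges_subset ω _ heP
    rw [mem_prefixEdges ω he] at heP
    by_contra heT
    exact absurd (h e he hu heT) (not_lt.2 (Nat.lt_succ_iff.1 heP))
  · intro h e he hu heT
    by_contra hle
    exact heT (h e ((mem_prefixEdges ω he _).2 (Nat.lt_succ_of_le (not_lt.1 hle))) hu)

variable [Fintype V]

lemma lastEdgeIs_iff (δ : ℕ) {e : Sym2 V} (he : e ∈ s) :
    lastEdgeIs δ ω e ↔ stopIndex δ ω = ω.symm ⟨e, he⟩ + 1 := by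
  rw [lastEdgeIs, mem_prefixEdges ω he, mem_prefixEdges ω he]
  omega

lemma stopIndex_eq_succ {δ i : ℕ} (hgood : ∀ w, δ ≤ degIn (prefixEdges ω (i + 1)) w) {u : V}
    (hbad : degIn (prefixEdges ω i) u < δ) : stopIndex δ ω = i + 1 := by
  refine le_antisymm (Nat.sInf_le hgood) (Nat.succ_le_of_lt (lt_of_not_ge fun hle => ?_))
  have hstop : ∀ w, δ ≤ degIn (prefixEdges ω (stopIndex δ ω)) w :=
    Nat.sInf_mem (s := {i | ∀ w, δ ≤ degIn (prefixEdges ω i) w}) ⟨_, hgood⟩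
  exact absurd ((hstop u).trans (degIn_mono (prefixEdges_mono ω hle) u)) (not_le.2 hbad)

end Ordering

theorem subgraph_last_edge_low_degree_iff_order_condition_general
    {V : Type*} [Fintype V] [DecidableEq V]
    (G J : SimpleGraph V) [DecidableRel G.Adj] [DecidableRel J.Adj]
    (δ : ℕ)
    (hJG : J ≤ G) (hJ : J.IsRegularOfDegree δ)
    (u v : V) (huvG : s(u, v) ∈ G.edgeFinset)
    (ω : Fin G.edgeFinset.card ≃ {e : Sym2 V // e ∈ G.edgeFinset}) :
    (J.edgeSet ⊆ ↑(finalEdges δ ω) ∧ lastEdgeIs δ ω s(u, v) ∧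
        degIn (finalEdges δ ω) u = δ) ↔
      ((∀ e (he : e ∈ G.edgeFinset), e ∈ J.edgeSet → e ≠ s(u, v) →
          ω.symm ⟨e, he⟩ < ω.symm ⟨s(u, v), huvG⟩) ∧
        (∀ e (he : e ∈ G.edgeFinset), u ∈ e → e ∉ J.edgeSet →
          ω.symm ⟨s(u, v), huvG⟩ < ω.symm ⟨e, he⟩)) := by
  have hJG' : J.edgeSet ⊆ G.edgeFinset := by
    rw [SimpleGraph.coe_edgeFinset]
    exact SimpleGraph.edgeSet_mono hJG
  have hdeg {P : Finset (Sym2 V)} (hJP : J.edgeSet ⊆ P) :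
      degIn P u = δ ↔ ∀ e ∈ P, u ∈ e → e ∈ J.edgeSet := by
    rw [← hJ.degree_eq u]
    exact degIn_eq_degree_iff hJP u
  rw [forall_ne_lt_iff_subset_prefixEdges ω hJG' huvG,
    forall_lt_iff_mem_of_mem_prefixEdges ω _ huvG, lastEdgeIs_iff ω δ huvG, finalEdges]
  constructor
  · rintro ⟨hJP, hk, hu⟩
    rw [hk] at hJP hu
    exact ⟨hJP, (hdeg hJP).1 hu⟩
  · rintro ⟨hJP, hinc⟩
    have hu := (hdeg hJP).2 hinc
    have hk : stopIndex δ ω = ω.symm ⟨s(u, v), huvG⟩ + 1 := by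
      refine stopIndex_eq_succ ω (fun w => hJ.degree_eq w ▸ degree_le_degIn hJP w) (u := u) ?_
      have huv_new := (mem_prefixEdges ω huvG _).not.2 (lt_irrefl _)
      rw [prefixEdges_succ ω huvG, degIn_insert (Sym2.mem_mk_left u v) huv_new] at hu
      omega
    rw [hk]
    exact ⟨hJP, rfl, hu⟩

/-- Let `G` be a finite simple graph with minimum degree at least `δ ≥ 1`, let `J` be a
`δ`-regular spanning subgraph of `G`, let `uv` be an edge of `J`, and let `ω` be an
ordering of the edges of `G`.  Then `J ⊆ G_ω`, `e_{k(ω)} = uv` and `u` has degree exactly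
`δ` in `G_ω` if and only if every edge of `J` other than `uv` occurs before `uv` in `ω`
and every edge of `G` incident to `u` not belonging to `J` occurs after `uv` in `ω`. -/
theorem subgraph_last_edge_low_degree_iff_order_condition
    {V : Type*} [Fintype V] [DecidableEq V]
    (G J : SimpleGraph V) [DecidableRel G.Adj] [DecidableRel J.Adj]
    (δ : ℕ) (hδ : 1 ≤ δ) (hGdeg : ∀ w : V, δ ≤ G.degree w)
    (hJG : J ≤ G) (hJ : J.IsRegularOfDegree δ)
    (u v : V) (huv : J.Adj u v) (huvG : s(u, v) ∈ G.edgeFinset)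
    (ω : Fin G.edgeFinset.card ≃ {e : Sym2 V // e ∈ G.edgeFinset}) :
    (J.edgeSet ⊆ ↑(finalEdges δ ω) ∧ lastEdgeIs δ ω s(u, v) ∧
        degIn (finalEdges δ ω) u = δ) ↔
      ((∀ e (he : e ∈ G.edgeFinset), e ∈ J.edgeSet → e ≠ s(u, v) →
          ω.symm ⟨e, he⟩ < ω.symm ⟨s(u, v), huvG⟩) ∧
        (∀ e (he : e ∈ G.edgeFinset), u ∈ e → e ∉ J.edgeSet →
          ω.symm ⟨s(u, v), huvG⟩ < ω.symm ⟨e, he⟩)) :=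
  subgraph_last_edge_low_degree_iff_order_condition_general G J δ hJG hJ u v huvG ω
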